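/- arXiv:1403.2310 — 4 statements merged into one kernel-verified Lean document; each statement's English description precedes it below -/
import Mathlib

section
/- Let q ≥ 1, λ ≥ 0, w ≥ 0, h < 0, and fix vectors g, β⁰ ∈ ℝ^q. Define d = g − hβ⁰ and define β̄ ∈ ℝ^q by: β̄ = 0 if ‖d‖₂ ≤ λw, and β̄ = −(1/h)(d − λw·d/‖d‖₂) otherwise. Then β̄ is a global minimizer of Q over ℝ^q, i.e., Q(β̄) ≤ Q(β) for all β ∈ ℝ^q. (Proposition 1 of the paper.) -/
/-!
Completing the square, `Q β = (-h)/2 ‖β‖² - ⟪β, d⟫ + λw ‖β‖ + const` with `d = g - h β⁰`.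
By Cauchy–Schwarz this is at least `(-h)/2 r² - (‖d‖ - λw) r + const` with `r = ‖β‖`, and the
one-dimensional minimum over `r ≥ 0` sits at `r = max 0 ((‖d‖ - λw)/(-h))`. The candidate `β̄` is a
nonnegative multiple of `d` of exactly that norm, so it attains both bounds.
-/

open scoped RealInnerProductSpace

lemma quadratic_max_zero_le {c s r : ℝ} (hc : 0 < c) (hr : 0 ≤ r) :
    c / 2 * max 0 (s / c) ^ 2 - s * max 0 (s / c) ≤ c / 2 * r ^ 2 - s * r := by
  rcases le_or_gt s 0 with hs | hs
  · rw [max_eq_left (div_nonpos_of_nonpos_of_nonneg hs hc.le)]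
    nlinarith
  · rw [max_eq_right (div_pos hs hc).le]
    have hsq : 0 ≤ (c * r - s) ^ 2 / (2 * c) := by positivity
    calc c / 2 * (s / c) ^ 2 - s * (s / c)
        = c / 2 * r ^ 2 - s * r - (c * r - s) ^ 2 / (2 * c) := by field_simp; ring
      _ ≤ c / 2 * r ^ 2 - s * r := by linarith

section SoftThreshold

variable {E : Type*} [NormedAddCommGroup E] [InnerProductSpace ℝ E]

noncomputable def softThreshold (c κ : ℝ) (d : E) : E :=
  if ‖d‖ ≤ κ then 0 else (1 / c) • (d - (κ / ‖d‖) • d)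

variable {c κ : ℝ} {d : E}

lemma softThreshold_of_lt (hκ : 0 ≤ κ) (hd : κ < ‖d‖) :
    softThreshold c κ d = ((‖d‖ - κ) / (c * ‖d‖)) • d := by
  have hd0 : ‖d‖ ≠ 0 := (hκ.trans_lt hd).ne'
  rw [softThreshold, if_neg hd.not_ge, smul_sub, smul_smul, ← sub_smul]
  congr 1
  field_simp

lemma norm_softThreshold (hc : 0 < c) (hκ : 0 ≤ κ) :
    ‖softThreshold c κ d‖ = max 0 ((‖d‖ - κ) / c) := by
  rcases le_or_gt ‖d‖ κ with hd | hd
  · rw [softThreshold, if_pos hd, norm_zero,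
      max_eq_left (div_nonpos_of_nonpos_of_nonneg (by linarith) hc.le)]
  · have hd0 : 0 < ‖d‖ := hκ.trans_lt hd
    rw [softThreshold_of_lt hκ hd, norm_smul, Real.norm_of_nonneg (by positivity),
      max_eq_right (div_pos (by linarith) hc).le]
    field_simp

lemma inner_softThreshold_self (hc : 0 < c) (hκ : 0 ≤ κ) :
    ⟪softThreshold c κ d, d⟫ = ‖softThreshold c κ d‖ * ‖d‖ := by
  rcases le_or_gt ‖d‖ κ with hd | hd
  · simp [softThreshold, hd]
  · have ht : 0 ≤ (‖d‖ - κ) / (c * ‖d‖) := by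
      have := hκ.trans_lt hd
      exact div_nonneg (by linarith) (by positivity)
    rw [softThreshold_of_lt hκ hd, real_inner_smul_left, real_inner_self_eq_norm_sq, norm_smul,
      Real.norm_of_nonneg ht]
    ring

theorem penalized_quadratic_softThreshold_le (hc : 0 < c) (hκ : 0 ≤ κ) (x : E) :
    c / 2 * ‖softThreshold c κ d‖ ^ 2 - ⟪softThreshold c κ d, d⟫ + κ * ‖softThreshold c κ d‖
      ≤ c / 2 * ‖x‖ ^ 2 - ⟪x, d⟫ + κ * ‖x‖ := by
  rw [inner_softThreshold_self hc hκ, norm_softThreshold hc hκ]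
  have hcs : ⟪x, d⟫ ≤ ‖x‖ * ‖d‖ := real_inner_le_norm x d
  have hmin := quadratic_max_zero_le (s := ‖d‖ - κ) hc (norm_nonneg x)
  linarith

end SoftThreshold

lemma neg_quadratic_model_add_eq {E : Type*} [NormedAddCommGroup E] [InnerProductSpace ℝ E]
    (h κ : ℝ) (g β0 β : E) :
    -(⟪β - β0, g⟫ + (h / 2) * ‖β - β0‖ ^ 2) + κ * ‖β‖
      = -h / 2 * ‖β‖ ^ 2 - ⟪β, g - h • β0⟫ + κ * ‖β‖ + (⟪β0, g⟫ - h / 2 * ‖β0‖ ^ 2) := by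
  rw [inner_sub_left, inner_sub_right, real_inner_smul_right, norm_sub_sq_real]
  ring

theorem stmt_0_general (q : ℕ) (lam w h : ℝ)
    (hlam : 0 ≤ lam) (hw : 0 ≤ w) (hh : h < 0)
    (g β0 : EuclideanSpace ℝ (Fin q)) :
    let Q : EuclideanSpace ℝ (Fin q) → ℝ := fun β =>
      -(⟪β - β0, g⟫ + (h / 2) * ‖β - β0‖ ^ 2) + lam * w * ‖β‖
    let d : EuclideanSpace ℝ (Fin q) := g - h • β0
    let βbar : EuclideanSpace ℝ (Fin q) :=
      if ‖d‖ ≤ lam * w then 0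
      else (-(1 / h)) • (d - ((lam * w) / ‖d‖) • d)
    ∀ β, Q βbar ≤ Q β := by
  intro Q d βbar β
  have hβbar : βbar = softThreshold (-h) (lam * w) d := by
    simp only [βbar, softThreshold, one_div_neg_eq_neg_one_div]
  have hmin := penalized_quadratic_softThreshold_le (d := d) (neg_pos.mpr hh) (mul_nonneg hlam hw) β
  simp only [Q, neg_quadratic_model_add_eq] at hmin ⊢
  rw [hβbar]
  linarith

/-- Proposition 1: the closed-form group-soft-thresholding update minimizes the
penalized quadratic approximation `Q`. -/
theorem stmt_0 (q : ℕ) (hq : 1 ≤ q) (lam w h : ℝ)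
    (hlam : 0 ≤ lam) (hw : 0 ≤ w) (hh : h < 0)
    (g β0 : EuclideanSpace ℝ (Fin q)) :
    let Q : EuclideanSpace ℝ (Fin q) → ℝ := fun β =>
      -(⟪β - β0, g⟫ + (h / 2) * ‖β - β0‖ ^ 2) + lam * w * ‖β‖
    let d : EuclideanSpace ℝ (Fin q) := g - h • β0
    let βbar : EuclideanSpace ℝ (Fin q) :=
      if ‖d‖ ≤ lam * w then 0
      else (-(1 / h)) • (d - ((lam * w) / ‖d‖) • d)
    ∀ β, Q βbar ≤ Q β :=
  stmt_0_general q lam w h hlam hw hh g β0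
end

section
/- Let q ≥ 1, λ ≥ 0, w ≥ 0, h < 0, and fix vectors g, β⁰ ∈ ℝ^q. Let β̄ be a global minimizer of Q over ℝ^q, let s = β̄ − β⁰, and define Δ = −⟨s, g⟩ + λw‖β̄‖₂ − λw‖β⁰‖₂. Then Δ ≤ (h/2)‖s‖₂²; in particular, if β̄ ≠ β⁰ then Δ < 0 (so s is a descent direction for the linearized objective, which guarantees sufficient descent in the paper's Armijo line search). -/
open scoped RealInnerProductSpace

/- Comparing the minimizer with the centre β⁰ itself, where the quadratic part vanishes, gives
Q(β̄) ≤ Q(β⁰) = λw‖β⁰‖₂, and this rearranges to Δ ≤ (h/2)‖s‖₂². Since h < 0 the right-hand side is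
negative as soon as s ≠ 0. -/

section PenalizedQuadratic

variable {E : Type*} [NormedAddCommGroup E] [InnerProductSpace ℝ E]

/-- `P` stands for the penalty `β ↦ λw‖β‖₂`. -/
noncomputable def penalizedQuadratic (g β0 : E) (h : ℝ) (P : E → ℝ) (β : E) : ℝ :=
  -(⟪β - β0, g⟫ + (h / 2) * ‖β - β0‖ ^ 2) + P β

@[simp]
theorem penalizedQuadratic_center (g β0 : E) (h : ℝ) (P : E → ℝ) :
    penalizedQuadratic g β0 h P β0 = P β0 := by
  simp [penalizedQuadratic]

theorem linearized_decrease_le_of_penalizedQuadratic_le_center {g β0 βbar : E} {h : ℝ}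
    {P : E → ℝ} (hle : penalizedQuadratic g β0 h P βbar ≤ penalizedQuadratic g β0 h P β0) :
    -⟪βbar - β0, g⟫ + P βbar - P β0 ≤ (h / 2) * ‖βbar - β0‖ ^ 2 := by
  rw [penalizedQuadratic_center] at hle
  unfold penalizedQuadratic at hle
  linarith

end PenalizedQuadratic

theorem half_mul_norm_sq_neg {E : Type*} [NormedAddCommGroup E] {h : ℝ} (hh : h < 0) {s : E}
    (hs : s ≠ 0) : (h / 2) * ‖s‖ ^ 2 < 0 :=
  mul_neg_of_neg_of_pos (by linarith) (by positivity)

theorem stmt_3_general (q : ℕ) (lam w h : ℝ)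
    (hh : h < 0)
    (g β0 βbar : EuclideanSpace ℝ (Fin q))
    (hmin : ∀ β : EuclideanSpace ℝ (Fin q),
      (-(⟪βbar - β0, g⟫ + (h / 2) * ‖βbar - β0‖ ^ 2) + lam * w * ‖βbar‖)
        ≤ -(⟪β - β0, g⟫ + (h / 2) * ‖β - β0‖ ^ 2) + lam * w * ‖β‖) :
    let s : EuclideanSpace ℝ (Fin q) := βbar - β0
    let Δ : ℝ := -⟪s, g⟫ + lam * w * ‖βbar‖ - lam * w * ‖β0‖
    Δ ≤ (h / 2) * ‖s‖ ^ 2 ∧ (βbar ≠ β0 → Δ < 0) := by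
  have hΔ := linearized_decrease_le_of_penalizedQuadratic_le_center
    (P := fun β => lam * w * ‖β‖) (hmin β0)
  exact ⟨hΔ, fun hne => hΔ.trans_lt (half_mul_norm_sq_neg hh (sub_ne_zero.mpr hne))⟩

/-- The minimizer of the penalized quadratic approximation yields a descent
direction for the linearized objective: `Δ ≤ (h/2)‖s‖₂²`, and `Δ < 0` if
`β̄ ≠ β⁰`. -/
theorem stmt_3 (q : ℕ) (hq : 1 ≤ q) (lam w h : ℝ)
    (hlam : 0 ≤ lam) (hw : 0 ≤ w) (hh : h < 0)
    (g β0 βbar : EuclideanSpace ℝ (Fin q))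
    (hmin : ∀ β : EuclideanSpace ℝ (Fin q),
      (-(⟪βbar - β0, g⟫ + (h / 2) * ‖βbar - β0‖ ^ 2) + lam * w * ‖βbar‖)
        ≤ -(⟪β - β0, g⟫ + (h / 2) * ‖β - β0‖ ^ 2) + lam * w * ‖β‖) :
    let s : EuclideanSpace ℝ (Fin q) := βbar - β0
    let Δ : ℝ := -⟪s, g⟫ + lam * w * ‖βbar‖ - lam * w * ‖β0‖
    Δ ≤ (h / 2) * ‖s‖ ^ 2 ∧ (βbar ≠ β0 → Δ < 0) :=
  stmt_3_general q lam w h hh g β0 βbar hmin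
end

section
/- Consider the product space ℝ^{d₀} × ∏_{g=1}^{G} ℝ^{d_g}, write a point as β = (β₀, β₁, …, β_G), and let ℓ be a concave differentiable function on this space. Let λ ≥ 0 and w_1, …, w_G ≥ 0, and define f(β) = −ℓ(β) + λ Σ_{g=1}^{G} w_g ‖β_g‖₂. Suppose β* is a point with β*_g = 0 for all g = 1, …, G such that the partial gradient of ℓ with respect to the β₀-block vanishes at β* and ‖∇_{β_g} ℓ(β*)‖₂ ≤ λ w_g for every g = 1, …, G. Then β* is a global minimizer of f. -/
/-!
Concavity puts `ℓ` below its tangent plane at `β*`, so `ℓ β - ℓ β* ≤ Dℓ(β*) (β - β*)`.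
Split the increment into blocks: the `β₀` block contributes nothing by the first-order
condition, and block `g` contributes `⟪∇_g ℓ(β*), β_g⟫ ≤ λ w_g ‖β_g‖` by Cauchy–Schwarz.
The sum of these bounds is the penalty at `β`, while the penalty at `β*` vanishes.
-/

open scoped RealInnerProductSpace

theorem ConcaveOn.le_add_fderiv {E : Type*} [NormedAddCommGroup E] [NormedSpace ℝ E]
    {s : Set E} {l : E → ℝ} (hconc : ConcaveOn ℝ s l) {x y : E} (hx : x ∈ s) (hy : y ∈ s)
    (hdiff : DifferentiableAt ℝ l x) :
    l y ≤ l x + fderiv ℝ l x (y - x) := by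
  set φ : ℝ →ᵃ[ℝ] E := AffineMap.lineMap x y
  have hline : ConcaveOn ℝ (φ ⁻¹' s) (l ∘ φ) := hconc.comp_affineMap φ
  have hderiv : HasDerivAt (l ∘ φ) (fderiv ℝ l x (y - x)) 0 := by
    have hdiff' : HasFDerivAt l (fderiv ℝ l x) (φ 0) := by
      simpa [φ] using hdiff.hasFDerivAt
    exact hdiff'.comp_hasDerivAt 0 AffineMap.hasDerivAt_lineMap
  have hslope := hline.slope_le_of_hasDerivAt (x := 0) (y := 1) (by simpa [φ] using hx)
    (by simpa [φ] using hy) one_pos hderiv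
  simp only [slope_def_field, Function.comp_apply, sub_zero, div_one, φ,
    AffineMap.lineMap_apply_zero, AffineMap.lineMap_apply_one] at hslope
  linarith

theorem map_prod_pi_eq_add_sum_single {ι E M 𝓕 : Type*} [Fintype ι] [DecidableEq ι]
    {F : ι → Type*} [AddCommMonoid E] [∀ i, AddCommMonoid (F i)] [AddCommMonoid M]
    [FunLike 𝓕 (E × ((i : ι) → F i)) M] [AddMonoidHomClass 𝓕 (E × ((i : ι) → F i)) M]
    (D : 𝓕) (v : E) (u : (i : ι) → F i) :
    D (v, u) = D (v, 0) + ∑ i, D (0, Pi.single i (u i)) := by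
  rw [← map_sum, ← map_add]
  congr 1
  ext
  · simp [Prod.fst_sum]
  · simp [Prod.snd_sum, Finset.univ_sum_single]

theorem stmt_5_general (d0 G : ℕ) (dg : Fin G → ℕ) (lam : ℝ)
    (w : Fin G → ℝ)
    (l : EuclideanSpace ℝ (Fin d0) × ((g : Fin G) → EuclideanSpace ℝ (Fin (dg g))) → ℝ)
    (hconc : ConcaveOn ℝ Set.univ l) (hdiff : Differentiable ℝ l)
    (βstar : EuclideanSpace ℝ (Fin d0) × ((g : Fin G) → EuclideanSpace ℝ (Fin (dg g))))
    (hzero : ∀ g, βstar.2 g = 0)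
    (h0 : ∀ v : EuclideanSpace ℝ (Fin d0), fderiv ℝ l βstar (v, 0) = 0)
    (hg : ∀ g : Fin G, ∃ Gg : EuclideanSpace ℝ (Fin (dg g)),
      (∀ v : EuclideanSpace ℝ (Fin (dg g)),
        fderiv ℝ l βstar (0, Pi.single g v) = ⟪Gg, v⟫) ∧ ‖Gg‖ ≤ lam * w g) :
    let f : EuclideanSpace ℝ (Fin d0) × ((g : Fin G) → EuclideanSpace ℝ (Fin (dg g))) → ℝ :=
      fun β => -l β + lam * ∑ g, w g * ‖β.2 g‖
    ∀ β, f βstar ≤ f β := by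
  intro f β
  set D := fderiv ℝ l βstar
  have htangent : l β ≤ l βstar + D (β - βstar) :=
    hconc.le_add_fderiv (Set.mem_univ _) (Set.mem_univ _) (hdiff βstar)
  have hsplit : D (β - βstar) = ∑ g, D (0, Pi.single g (β.2 g)) := by
    have hincr_snd : (β - βstar).2 = β.2 := by ext1 g; simp [hzero]
    rw [← Prod.mk.eta (p := β - βstar), map_prod_pi_eq_add_sum_single, h0, zero_add, hincr_snd]
  have hblock : ∀ g, D (0, Pi.single g (β.2 g)) ≤ lam * (w g * ‖β.2 g‖) := by
    intro g
    obtain ⟨Gg, hGg, hnorm⟩ := hg g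
    calc D (0, Pi.single g (β.2 g)) = ⟪Gg, β.2 g⟫ := hGg _
      _ ≤ ‖Gg‖ * ‖β.2 g‖ := real_inner_le_norm _ _
      _ ≤ lam * (w g * ‖β.2 g‖) := by
        rw [← mul_assoc]; exact mul_le_mul_of_nonneg_right hnorm (norm_nonneg _)
  have hpenalty : D (β - βstar) ≤ lam * ∑ g, w g * ‖β.2 g‖ := by
    rw [hsplit, Finset.mul_sum]
    exact Finset.sum_le_sum fun g _ => hblock g
  simp only [f, hzero, norm_zero, mul_zero, Finset.sum_const_zero]
  linarith

/-- Groupwise KKT condition: if all penalized groups of `β*` vanish, the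
partial gradient in the unpenalized block vanishes, and each groupwise partial
gradient has norm at most `λ w_g`, then `β*` globally minimizes the
group-Lasso-penalized objective. -/
theorem stmt_5 (d0 G : ℕ) (dg : Fin G → ℕ) (lam : ℝ) (hlam : 0 ≤ lam)
    (w : Fin G → ℝ) (hw : ∀ g, 0 ≤ w g)
    (l : EuclideanSpace ℝ (Fin d0) × ((g : Fin G) → EuclideanSpace ℝ (Fin (dg g))) → ℝ)
    (hconc : ConcaveOn ℝ Set.univ l) (hdiff : Differentiable ℝ l)
    (βstar : EuclideanSpace ℝ (Fin d0) × ((g : Fin G) → EuclideanSpace ℝ (Fin (dg g))))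
    (hzero : ∀ g, βstar.2 g = 0)
    (h0 : ∀ v : EuclideanSpace ℝ (Fin d0), fderiv ℝ l βstar (v, 0) = 0)
    (hg : ∀ g : Fin G, ∃ Gg : EuclideanSpace ℝ (Fin (dg g)),
      (∀ v : EuclideanSpace ℝ (Fin (dg g)),
        fderiv ℝ l βstar (0, Pi.single g v) = ⟪Gg, v⟫) ∧ ‖Gg‖ ≤ lam * w g) :
    let f : EuclideanSpace ℝ (Fin d0) × ((g : Fin G) → EuclideanSpace ℝ (Fin (dg g))) → ℝ :=
      fun β => -l β + lam * ∑ g, w g * ‖β.2 g‖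
    ∀ β, f βstar ≤ f β :=
  stmt_5_general d0 G dg lam w l hconc hdiff βstar hzero h0 hg
end

section
/- In the discrete Bayesian network multi-logit setup, let φ and φ* be parameters satisfying the identifiability constraints whose induced graphs G_φ and G_{φ*} are acyclic, and suppose φ* is natural. If p(x | φ_{[k]}) = p(x | φ*_{[k]}) for every configuration x ∈ ∏_{i=1}^{p} {1,…,r_i} and every k = 1,…,p, then φ = φ*. (First claim of Theorem 1: identifiability of the causal discrete Bayesian network from single-node interventional distributions.) -/
/-!
Intervening on `k` leaves `X_k` without parents, so its marginal under `φ_[k]` is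
`softmax (b_k)`: the remaining factors are conditional distributions along an acyclic graph
and sum to one when the variables are summed out sink by sink. With `(b_k)_1 = 0` this gives
`b = b*`. Then `p(x | φ_[k]) = softmax (b_k) (x_k) · ∏_{j ≠ k} P(X_j = x_j | x)`, so the
products of the conditionals over `j ≠ k` agree for every `k`; for `p ≥ 2` this forces every
conditional to agree. A softmax determines its logits up to an additive constant, which the
sum-to-zero constraints kill, and evaluating `η_{jℓ}` at the configuration that is at level 1
except for `X_i` reads off each `β_{jℓi}`.
-/

open Finset Function Real

section Softmax

variable {ι : Type*} [Fintype ι]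

noncomputable def softmax (u : ι → ℝ) (a : ι) : ℝ :=
  exp (u a) / ∑ m, exp (u m)

theorem sum_exp_pos [Nonempty ι] (u : ι → ℝ) : 0 < ∑ m, exp (u m) :=
  sum_pos (fun m _ => exp_pos (u m)) univ_nonempty

theorem softmax_pos (u : ι → ℝ) (a : ι) : 0 < softmax u a :=
  have : Nonempty ι := ⟨a⟩
  div_pos (exp_pos _) (sum_exp_pos u)

theorem sum_softmax [Nonempty ι] (u : ι → ℝ) : ∑ a, softmax u a = 1 := by
  simp only [softmax]
  rw [← sum_div, div_self (sum_exp_pos u).ne']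

theorem log_softmax (u : ι → ℝ) (a : ι) :
    log (softmax u a) = u a - log (∑ m, exp (u m)) := by
  have : Nonempty ι := ⟨a⟩
  rw [softmax, log_div (exp_pos _).ne' (sum_exp_pos u).ne', log_exp]

theorem sub_eq_sub_of_softmax_eq {u v : ι → ℝ} (h : softmax u = softmax v) (a a' : ι) :
    u a - v a = u a' - v a' := by
  have hlog := fun a => congrArg log (congrFun h a)
  simp only [log_softmax] at hlog
  linarith [hlog a, hlog a']

theorem eq_of_softmax_eq_of_apply_eq {u v : ι → ℝ} (h : softmax u = softmax v) {a₀ : ι}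
    (h₀ : u a₀ = v a₀) : u = v :=
  funext fun a => by linarith [sub_eq_sub_of_softmax_eq h a a₀]

theorem eq_of_softmax_eq_of_sum_eq {u v : ι → ℝ} (h : softmax u = softmax v)
    (hsum : ∑ a, u a = ∑ a, v a) : u = v := by
  funext a
  have hsub : ∑ a', (u a' - v a') = Fintype.card ι • (u a - v a) := by
    rw [← card_univ, ← sum_const]
    exact sum_congr rfl fun a' _ => sub_eq_sub_of_softmax_eq h a' a
  rw [sum_sub_distrib, hsum, sub_self, eq_comm, smul_eq_zero] at hsub
  have : Nonempty ι := ⟨a⟩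
  linarith [hsub.resolve_left Fintype.card_ne_zero]

end Softmax

theorem eq_of_forall_prod_erase_eq {ι K : Type*} [Fintype ι] [DecidableEq ι] [Field K]
    [LinearOrder K] [IsStrictOrderedRing K] {u v : ι → K} (hu : ∀ i, 0 < u i)
    (hv : ∀ i, 0 < v i) (h : ∀ k, ∏ i ∈ univ.erase k, u i = ∏ i ∈ univ.erase k, v i)
    (hcard : 2 ≤ Fintype.card ι) : u = v := by
  have hW : ∀ k, u k / v k = ∏ i, u i / v i := fun k => by
    rw [← mul_prod_erase univ _ (mem_univ k), prod_div_distrib, h k,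
      div_self (prod_pos fun i _ => hv i).ne', mul_one]
  set W := ∏ i, u i / v i
  have hWpos : 0 < W := prod_pos fun i _ => div_pos (hu i) (hv i)
  have hWpow : W ^ (Fintype.card ι - 1) = 1 := by
    have hprod : W = W ^ Fintype.card ι := by
      conv_lhs => rw [show W = ∏ i : ι, W from prod_congr rfl fun i _ => hW i]
      rw [prod_const, card_univ]
    rw [← mul_right_cancel_iff_of_pos hWpos, ← pow_succ, one_mul,
      Nat.sub_add_cancel (by omega)]
    exact hprod.symm
  have hW1 : W = 1 := (pow_eq_one_iff_of_nonneg hWpos.le (by omega)).mp hWpow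
  funext k
  exact (div_eq_one_iff_eq (hv k).ne').mp ((hW k).trans hW1)

theorem Finset.exists_sink_of_acyclic {α : Type*} [Finite α] {e : α → α → Prop}
    (hac : ∀ v, ¬ Relation.TransGen e v v) {S : Finset α} (hS : S.Nonempty) :
    ∃ j ∈ S, ∀ j' ∈ S, ¬ e j j' := by
  have : IsTrans α (flip (Relation.TransGen e)) := ⟨fun _ _ _ hab hbc => hbc.trans hab⟩
  have : Std.Irrefl (flip (Relation.TransGen e)) := ⟨hac⟩
  obtain ⟨j, hjS, hmin⟩ :=
    (Finite.wellFounded_of_trans_of_irrefl (flip (Relation.TransGen e))).has_min _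
      (coe_nonempty.mpr hS)
  exact ⟨j, hjS, fun j' hj' he => hmin j' hj' (.single he)⟩

section Kernels

variable {ι : Type*} [Fintype ι] [DecidableEq ι] {α : ι → Type*} [∀ i, Fintype (α i)]
  [∀ i, DecidableEq (α i)]

theorem sum_filter_eqOn_compl_eq_sum_update {M : Type*} [AddCommMonoid M]
    (f : (∀ i, α i) → M) (x : ∀ i, α i) {S : Finset ι} {j : ι} (hj : j ∈ S) :
    ∑ y ∈ univ.filter (fun y => ∀ i ∉ S, y i = x i), f y =
      ∑ y ∈ univ.filter (fun y => ∀ i ∉ S.erase j, y i = x i), ∑ a, f (update y j a) := by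
  rw [← sum_product']
  refine sum_nbij' (fun y => (update y j (x j), y j)) (fun za => update za.1 j za.2)
    ?_ ?_ ?_ ?_ ?_
  · intro y hy
    simp only [mem_filter, mem_univ, true_and, mem_product, and_true] at hy ⊢
    intro i hi
    rcases eq_or_ne i j with rfl | hij
    · exact update_self ..
    · rw [update_of_ne hij]
      exact hy i fun hiS => hi (mem_erase.mpr ⟨hij, hiS⟩)
  · rintro ⟨z, a⟩ hz
    simp only [mem_filter, mem_univ, true_and, mem_product, and_true] at hz ⊢
    intro i hi
    have hij : i ≠ j := fun h => hi (h ▸ hj)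
    rw [update_of_ne hij]
    exact hz i fun hiS => hi (mem_of_mem_erase hiS)
  · intro y _
    simp
  · rintro ⟨z, a⟩ hz
    simp only [mem_filter, mem_univ, true_and, mem_product, and_true] at hz
    simp [hz j (notMem_erase j S)]
  · intro y _
    simp

theorem sum_prod_eq_one_of_acyclic {e : ι → ι → Prop}
    (hac : ∀ v, ¬ Relation.TransGen e v v)
    (f : ι → (∀ i, α i) → ℝ) (hnorm : ∀ j x, ∑ a, f j (update x j a) = 1)
    (hlocal : ∀ i j x a, i ≠ j → ¬ e i j → f j (update x i a) = f j x)
    (S : Finset ι) (x : ∀ i, α i) :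
    ∑ y ∈ univ.filter (fun y => ∀ i ∉ S, y i = x i), ∏ j ∈ S, f j y = 1 := by
  induction S using Finset.strongInduction generalizing x with
  | H S ih =>
  rcases S.eq_empty_or_nonempty with rfl | hS
  · simp [← funext_iff, filter_eq']
  obtain ⟨j, hjS, hsink⟩ := exists_sink_of_acyclic hac hS
  have hfiber : ∀ y, ∑ a, ∏ j' ∈ S, f j' (update y j a) = ∏ j' ∈ S.erase j, f j' y := by
    intro y
    have hrest : ∀ a, ∏ j' ∈ S.erase j, f j' (update y j a) = ∏ j' ∈ S.erase j, f j' y :=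
      fun a => prod_congr rfl fun j' hj' =>
        hlocal j j' y a (ne_of_mem_erase hj').symm (hsink j' (mem_of_mem_erase hj'))
    simp only [← mul_prod_erase S _ hjS, hrest, ← sum_mul, hnorm, one_mul]
  rw [sum_filter_eqOn_compl_eq_sum_update _ x hjS]
  simp only [hfiber]
  exact ih _ (erase_ssubset hjS) x

end Kernels

namespace DiscreteBN

variable {p : ℕ} {r : Fin p → ℕ}

abbrev Config (r : Fin p → ℕ) := (i : Fin p) → Fin (r i)

abbrev Intercepts (r : Fin p → ℕ) := (j : Fin p) → Fin (r j) → ℝ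

abbrev Coeffs (r : Fin p → ℕ) :=
  (j : Fin p) → Fin (r j) → (i : Fin p) → Fin (r i - 1) → ℝ

/-- `x i : Fin (r i)` is the level minus one, so the dummy encoding `D_i (x i)` has its
nonzero entry at `t : Fin (r i - 1)` exactly when `t + 1 = x i`. -/
noncomputable def eta (bb : Intercepts r) (ββ : Coeffs r) (j : Fin p) (m : Fin (r j))
    (x : Config r) : ℝ :=
  bb j m + ∑ i ∈ univ.erase j, ∑ t : Fin (r i - 1),
    (if (t : ℕ) + 1 = (x i : ℕ) then (1 : ℝ) else 0) * ββ j m i t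

noncomputable def cond (bb : Intercepts r) (ββ : Coeffs r) (j : Fin p) (x : Config r) : ℝ :=
  softmax (fun m => eta bb ββ j m x) (x j)

noncomputable def jointPmf (bb : Intercepts r) (ββ : Coeffs r) (x : Config r) : ℝ :=
  ∏ j, cond bb ββ j x

def intervene (ββ : Coeffs r) (k : Fin p) : Coeffs r :=
  fun j l i t => if j = k then 0 else ββ j l i t

def edge (ββ : Coeffs r) (i j : Fin p) : Prop :=
  i ≠ j ∧ ∃ l t, ββ j l i t ≠ 0

def zeroConfig (hr : ∀ i, 0 < r i) : Config r :=
  fun i => ⟨0, hr i⟩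

variable {bb : Intercepts r} {ββ β β' : Coeffs r}

theorem eta_update_of_not_edge {i j : Fin p} (h : ¬ edge ββ i j) (m : Fin (r j))
    (x : Config r) (a : Fin (r i)) : eta bb ββ j m (update x i a) = eta bb ββ j m x := by
  unfold eta
  congr 1
  refine sum_congr rfl fun i' hi' => ?_
  rcases eq_or_ne i' i with rfl | hi'i
  · have hzero : ∀ l t, ββ j l i' t = 0 := by
      simpa [edge, ne_of_mem_erase hi'] using h
    simp [hzero]
  · rw [update_of_ne hi'i]

theorem cond_update_of_not_edge {i j : Fin p} (hij : i ≠ j) (h : ¬ edge ββ i j)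
    (x : Config r) (a : Fin (r i)) : cond bb ββ j (update x i a) = cond bb ββ j x := by
  simp only [cond, eta_update_of_not_edge h, update_of_ne hij.symm]

theorem cond_update_self (j : Fin p) (x : Config r) (a : Fin (r j)) :
    cond bb ββ j (update x j a) = softmax (fun m => eta bb ββ j m x) a := by
  have hself : ¬ edge ββ j j := fun h => h.1 rfl
  simp only [cond, eta_update_of_not_edge hself, update_self]

theorem sum_cond_update (j : Fin p) (x : Config r) :
    ∑ a, cond bb ββ j (update x j a) = 1 := by
  have : Nonempty (Fin (r j)) := ⟨x j⟩
  simp only [cond_update_self, sum_softmax]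

theorem cond_pos (j : Fin p) (x : Config r) : 0 < cond bb ββ j x :=
  softmax_pos _ _

theorem sum_eta {j : Fin p} (hββ : ∀ i t, ∑ l, ββ j l i t = 0) (x : Config r) :
    ∑ m, eta bb ββ j m x = ∑ m, bb j m := by
  simp only [eta, sum_add_distrib, add_eq_left]
  rw [sum_comm]
  refine sum_eq_zero fun i _ => ?_
  rw [sum_comm]
  exact sum_eq_zero fun t _ => by rw [← mul_sum, hββ i t, mul_zero]

theorem eta_update_zeroConfig (hr : ∀ i, 0 < r i) {i j : Fin p} (hij : i ≠ j)
    (m : Fin (r j)) (t : Fin (r i - 1)) :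
    eta bb ββ j m (update (zeroConfig hr) i ⟨t + 1, by omega⟩) = bb j m + ββ j m i t := by
  have hmem : i ∈ univ.erase j := mem_erase.mpr ⟨hij, mem_univ i⟩
  rw [eta, sum_eq_single_of_mem i hmem, sum_eq_single_of_mem t (mem_univ t)]
  · simp
  · intro t' _ ht'
    simp [Fin.val_inj, ht']
  · intro i' _ hi'
    simp [update_of_ne hi', zeroConfig]

theorem jointPmf_intervene (k : Fin p) (x : Config r) :
    jointPmf bb (intervene ββ k) x =
      softmax (bb k) (x k) * ∏ j ∈ univ.erase k, cond bb ββ j x := by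
  rw [jointPmf, ← mul_prod_erase univ _ (mem_univ k)]
  congr 1
  · simp [cond, eta, intervene]
  · refine prod_congr rfl fun j hj => ?_
    simp [cond, eta, intervene, ne_of_mem_erase hj]

theorem sum_jointPmf_intervene_filter_eq_softmax
    (hac : ∀ v, ¬ Relation.TransGen (edge ββ) v v) (k : Fin p) (x : Config r) :
    ∑ y ∈ univ.filter (fun y => y k = x k), jointPmf bb (intervene ββ k) y =
      softmax (bb k) (x k) := by
  have hparents := sum_prod_eq_one_of_acyclic hac (cond bb ββ) sum_cond_update
    (fun i j x a hij h => cond_update_of_not_edge hij h x a) (univ.erase k) x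
  rw [sum_congr rfl fun y hy => by rw [jointPmf_intervene, (mem_filter.mp hy).2], ← mul_sum]
  convert mul_one (softmax (bb k) (x k))
  convert hparents using 2
  ext y
  simp

theorem softmax_intercept_eq_of_jointPmf_intervene_eq (hr : ∀ i, 0 < r i)
    {b b' : Intercepts r}
    (hac : ∀ v, ¬ Relation.TransGen (edge β) v v)
    (hac' : ∀ v, ¬ Relation.TransGen (edge β') v v) (k : Fin p)
    (h : ∀ x, jointPmf b (intervene β k) x = jointPmf b' (intervene β' k) x) :
    softmax (b k) = softmax (b' k) := by
  funext a
  rw [← update_self k a (zeroConfig hr), ← sum_jointPmf_intervene_filter_eq_softmax hac,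
    ← sum_jointPmf_intervene_filter_eq_softmax hac']
  exact sum_congr rfl fun x _ => h x

theorem cond_eq_of_jointPmf_intervene_eq (hp : 2 ≤ p)
    (h : ∀ k x, jointPmf bb (intervene β k) x = jointPmf bb (intervene β' k) x)
    (j : Fin p) (x : Config r) : cond bb β j x = cond bb β' j x := by
  refine congrFun (eq_of_forall_prod_erase_eq (fun j => cond_pos j x) (fun j => cond_pos j x)
    (fun k => ?_) (by simpa using hp)) j
  have hk := h k x
  rw [jointPmf_intervene, jointPmf_intervene] at hk
  exact mul_left_cancel₀ (softmax_pos _ _).ne' hk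

theorem eta_eq_of_cond_eq {j : Fin p} (hβ : ∀ i t, ∑ l, β j l i t = 0)
    (hβ' : ∀ i t, ∑ l, β' j l i t = 0) (h : ∀ x, cond bb β j x = cond bb β' j x)
    (x : Config r) : (fun m => eta bb β j m x) = fun m => eta bb β' j m x :=
  eq_of_softmax_eq_of_sum_eq
    (funext fun a => by simpa only [cond_update_self] using h (update x j a))
    (by rw [sum_eta hβ, sum_eta hβ'])

end DiscreteBN

open DiscreteBN

/-- First claim of Theorem 1: identifiability of the causal discrete Bayesian
network multi-logit model from single-node interventional distributions. If
`φ = (b, β)` and `φ* = (bs, βs)` both satisfy the identifiability constraints,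
induce acyclic graphs, `φ*` is natural, and `p(· | φ_[k]) = p(· | φ*_[k])` for
every `k`, then `φ = φ*`. -/
theorem stmt_17 (p : ℕ) (r : Fin p → ℕ) (hr : ∀ i, 2 ≤ r i)
    (b bs : (j : Fin p) → Fin (r j) → ℝ)
    (β βs : (j : Fin p) → Fin (r j) → (i : Fin p) → Fin (r i - 1) → ℝ)
    (hb : ∀ j, b j ⟨0, by have := hr j; omega⟩ = 0)
    (hbs : ∀ j, bs j ⟨0, by have := hr j; omega⟩ = 0)
    (hβ : ∀ j i t, ∑ l, β j l i t = 0)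
    (hβs : ∀ j i t, ∑ l, βs j l i t = 0)
    (hdiag : ∀ j l t, β j l j t = 0)
    (hdiags : ∀ j l t, βs j l j t = 0) :
    let η : ((j : Fin p) → Fin (r j) → ℝ) →
        ((j : Fin p) → Fin (r j) → (i : Fin p) → Fin (r i - 1) → ℝ) →
        (j : Fin p) → Fin (r j) → ((i : Fin p) → Fin (r i)) → ℝ :=
      fun bb ββ j m x =>
        bb j m + ∑ i ∈ Finset.univ.erase j, ∑ t : Fin (r i - 1),
          (if (t : ℕ) + 1 = (x i : ℕ) then (1 : ℝ) else 0) * ββ j m i t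
    let pmf : ((j : Fin p) → Fin (r j) → ℝ) →
        ((j : Fin p) → Fin (r j) → (i : Fin p) → Fin (r i - 1) → ℝ) →
        ((i : Fin p) → Fin (r i)) → ℝ :=
      fun bb ββ x => ∏ j, Real.exp (η bb ββ j (x j) x) / ∑ m, Real.exp (η bb ββ j m x)
    let intervene : ((j : Fin p) → Fin (r j) → (i : Fin p) → Fin (r i - 1) → ℝ) → Fin p →
        ((j : Fin p) → Fin (r j) → (i : Fin p) → Fin (r i - 1) → ℝ) :=
      fun ββ k j l i t => if j = k then 0 else ββ j l i t
    let edge : ((j : Fin p) → Fin (r j) → (i : Fin p) → Fin (r i - 1) → ℝ) →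
        Fin p → Fin p → Prop :=
      fun ββ i j => i ≠ j ∧ ∃ l t, ββ j l i t ≠ 0
    let indep : (((i : Fin p) → Fin (r i)) → ℝ) → Fin p → Fin p → Prop :=
      fun q i j => ∀ (a : Fin (r i)) (c : Fin (r j)),
        (∑ x : (i' : Fin p) → Fin (r i'), if x i = a ∧ x j = c then q x else 0) =
        (∑ x : (i' : Fin p) → Fin (r i'), if x i = a then q x else 0) *
        (∑ x : (i' : Fin p) → Fin (r i'), if x j = c then q x else 0)
    (∀ v, ¬ Relation.TransGen (edge β) v v) →
    (∀ v, ¬ Relation.TransGen (edge βs) v v) →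
    (∀ i j, Relation.TransGen (edge βs) i j → ¬ indep (pmf bs (intervene βs i)) i j) →
    (∀ (k : Fin p) (x : (i : Fin p) → Fin (r i)),
      pmf b (intervene β k) x = pmf bs (intervene βs k) x) →
    b = bs ∧ β = βs := by
  intro η pmf intervene edge indep hac hacs _ heq
  have hr0 : ∀ i, 0 < r i := fun i => by have := hr i; omega
  have hint : b = bs := funext fun k => eq_of_softmax_eq_of_apply_eq
    (softmax_intercept_eq_of_jointPmf_intervene_eq hr0 hac hacs k (heq k))
    ((hb k).trans (hbs k).symm)
  subst hint
  refine ⟨rfl, funext fun j => funext fun m => funext fun i => funext fun t => ?_⟩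
  rcases eq_or_ne i j with rfl | hij
  · rw [hdiag, hdiags]
  have hp : 2 ≤ p := by
    have := Fin.val_ne_of_ne hij
    omega
  have heta := congrFun (eta_eq_of_cond_eq (hβ j) (hβs j)
    (cond_eq_of_jointPmf_intervene_eq hp heq j)
    (update (zeroConfig hr0) i ⟨t + 1, by omega⟩)) m
  simpa only [eta_update_zeroConfig hr0 hij, add_right_inj] using heta
end
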